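/- Let N ≥ 2 and suppose R_i = 1 for all i = 1,...,m, so that m = pN for some positive integer p. Let β_1,...,β_m be integers with 0 ≤ β_i ≤ N−1, and define τ_k by ∑_{i=1}^m \overline{β_i + k} = m(N−1)/2 − N τ_k for 0 ≤ k ≤ N−1. Then τ_k = 0 for all k if and only if for each l ∈ {0,...,N−1}, exactly p of the β_i are equal to l. -/

import Mathlib

/-- `ob N j` is the representative of `j` mod `N` in `{0, …, N-1}`. -/
def ob (N : ℕ) (j : ℤ) : ℤ := j % (N : ℤ)

/-!
Write `S k = ∑ᵢ ob N (βᵢ + k)`. Passing from `k` to `k + 1` raises every residue by one,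
except the residues `N - 1` that wrap around to `0`; these come exactly from the `βᵢ` equal to
`ob N (N - 1 - k)`. Hence `S (k + 1) = S k + m - N · #{i | βᵢ = ob N (N - 1 - k)}`, and since
`S` has period `N`, it is constant on `0, …, N - 1` iff every residue occurs `m / N = p` times.
In that case `S 0 = ∑ᵢ βᵢ = p · N (N - 1) / 2`, which is the constant forced by `τ = 0`.
-/

open Finset

section

variable {N : ℕ}

lemma ob_add_one (y : ℤ) :
    ob N (y + 1) = ob N y + 1 - if ob N y = N - 1 then (N : ℤ) else 0 := by
  rcases N.eq_zero_or_pos with rfl | hN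
  · simp [ob]
  have h0 : 0 ≤ ob N y := Int.emod_nonneg y (by omega)
  have h1 : ob N y < N := Int.emod_lt_of_pos y (by omega)
  have hmod : ob N (y + 1) = ob N (ob N y + 1) := by simp [ob, Int.add_emod]
  rw [hmod]
  split_ifs with h
  · rw [h, sub_add_cancel]; simp [ob]
  · rw [sub_zero]; exact Int.emod_eq_of_lt (by omega) (by omega)

lemma ob_add_eq_sub_one_iff (hN : 0 < N) {l : ℤ} (hl : 0 ≤ l ∧ l < N) (k : ℤ) :
    ob N (l + k) = N - 1 ↔ l = ob N (N - 1 - k) := by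
  have htop : ob N (N - 1) = N - 1 := Int.emod_eq_of_lt (by omega) (by omega)
  have hl' : ob N l = l := Int.emod_eq_of_lt hl.1 hl.2
  conv_lhs => rw [← htop]
  conv_rhs => rw [← hl']
  change l + k ≡ N - 1 [ZMOD N] ↔ l ≡ N - 1 - k [ZMOD N]
  rw [Int.modEq_iff_dvd, Int.modEq_iff_dvd, show (N : ℤ) - 1 - (l + k) = N - 1 - k - l by ring]

lemma two_mul_sum_Ico_zero (n : ℕ) : 2 * ∑ l ∈ Ico (0 : ℤ) n, l = n * (n - 1) := by
  rw [Int.Ico_eq_finset_map, sum_map]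
  simp only [sub_zero, Int.toNat_natCast, Function.Embedding.trans_apply, Nat.castEmbedding_apply,
    addLeftEmbedding_apply, zero_add]
  induction n with
  | zero => simp
  | succ n ih => rw [sum_range_succ]; push_cast; linear_combination ih

variable {ι : Type*} [Fintype ι] {β : ι → ℤ}

lemma sum_eq_sum_Ico_card_filter_mul (hβ : ∀ i, 0 ≤ β i ∧ β i < N) :
    ∑ i, β i = ∑ l ∈ Ico (0 : ℤ) N, #{i | β i = l} * l := by
  rw [← sum_fiberwise_of_maps_to (g := β) (t := Ico (0 : ℤ) N) fun i _ => mem_Ico.2 (hβ i)]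
  refine sum_congr rfl fun l _ => ?_
  rw [sum_congr rfl fun i hi => (mem_filter.1 hi).2, sum_const, nsmul_eq_mul]

lemma sum_ob_add_add_one (hN : 0 < N) (hβ : ∀ i, 0 ≤ β i ∧ β i < N) (k : ℤ) :
    ∑ i, ob N (β i + (k + 1)) =
      ∑ i, ob N (β i + k) + Fintype.card ι - N * #{i | β i = ob N (N - 1 - k)} := by
  have hterm : ∀ i, ob N (β i + (k + 1)) =
      ob N (β i + k) + 1 - if β i = ob N (N - 1 - k) then (N : ℤ) else 0 := by
    intro i
    rw [← add_assoc, ob_add_one]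
    simp only [ob_add_eq_sub_one_iff hN (hβ i)]
  simp only [hterm, sum_sub_distrib, sum_add_distrib, ← sum_filter, sum_const, card_univ,
    nsmul_eq_mul, mul_one]
  ring

lemma card_filter_mul_eq_card_of_sum_ob_eq (hN : 0 < N) (hβ : ∀ i, 0 ≤ β i ∧ β i < N) {c : ℤ}
    (hc : ∀ k < N, ∑ i, ob N (β i + (k : ℤ)) = c) {l : ℤ} (hl : 0 ≤ l ∧ l < N) :
    N * #{i | β i = l} = Fintype.card ι := by
  obtain ⟨k, hk, hkl⟩ : ∃ k < N, (k : ℤ) = N - 1 - l := ⟨N - 1 - l.toNat, by omega, by omega⟩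
  have hwrap : ob N (N - 1 - k) = l := by
    rw [hkl, show (N : ℤ) - 1 - (N - 1 - l) = l by ring]
    exact Int.emod_eq_of_lt hl.1 hl.2
  have hnext : ∑ i, ob N (β i + ((k : ℤ) + 1)) = c := by
    rcases Nat.lt_or_ge (k + 1) N with hlt | hge
    · exact_mod_cast hc (k + 1) hlt
    · have hkN : (k : ℤ) + 1 = N := by omega
      simp only [hkN, ob, Int.add_emod_right]
      simpa [ob] using hc 0 hN
  have hstep := sum_ob_add_add_one hN hβ k
  rw [hnext, hc k hk, hwrap] at hstep
  exact_mod_cast (by linarith : (N : ℤ) * #{i | β i = l} = Fintype.card ι)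

lemma two_mul_sum_ob_add_of_card_filter_eq (hN : 0 < N) (hβ : ∀ i, 0 ≤ β i ∧ β i < N) {p : ℕ}
    (hcard : Fintype.card ι = p * N) (hp : ∀ l : ℤ, 0 ≤ l → l < N → #{i | β i = l} = p)
    (k : ℕ) : 2 * ∑ i, ob N (β i + k) = p * N * (N - 1) := by
  induction k with
  | zero =>
    have hob : ∀ i, ob N (β i + (0 : ℕ)) = β i := fun i => by
      simpa [ob] using Int.emod_eq_of_lt (hβ i).1 (hβ i).2
    rw [sum_congr rfl fun i _ => hob i, sum_eq_sum_Ico_card_filter_mul hβ,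
      sum_congr rfl fun l hl => by rw [hp l (mem_Ico.1 hl).1 (mem_Ico.1 hl).2], ← mul_sum]
    linear_combination (p : ℤ) * two_mul_sum_Ico_zero N
  | succ k ih =>
    have hmid : 0 ≤ ob N (N - 1 - k) ∧ ob N (N - 1 - k) < N :=
      ⟨Int.emod_nonneg _ (by omega), Int.emod_lt_of_pos _ (by omega)⟩
    rw [Nat.cast_succ, sum_ob_add_add_one hN hβ, hp _ hmid.1 hmid.2, hcard]
    push_cast
    linear_combination ih

end

theorem tau_zero_iff_equidistributed_general (N p m : ℕ) (hN : 2 ≤ N)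
    (hm : m = p * N)
    (β : Fin m → ℤ) (hβ : ∀ i, 0 ≤ β i ∧ β i ≤ (N : ℤ) - 1)
    (τ : ℕ → ℤ)
    (hτ : ∀ k < N, ∑ i, ob N (β i + (k : ℤ))
      = (m : ℤ) * ((N : ℤ) - 1) / 2 - (N : ℤ) * τ k) :
    (∀ k < N, τ k = 0) ↔
      ∀ l : ℤ, 0 ≤ l → l ≤ (N : ℤ) - 1 →
        (Finset.univ.filter (fun i => β i = l)).card = p := by
  have hN0 : 0 < N := by omega
  have hβ' : ∀ i, 0 ≤ β i ∧ β i < N := fun i => ⟨(hβ i).1, by linarith [(hβ i).2]⟩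
  have hcard : Fintype.card (Fin m) = p * N := by rw [Fintype.card_fin, hm]
  constructor
  · intro hτ0 l hl0 hl1
    have hconst : ∀ k < N, ∑ i, ob N (β i + (k : ℤ)) = (m : ℤ) * ((N : ℤ) - 1) / 2 :=
      fun k hk => by rw [hτ k hk, hτ0 k hk, mul_zero, sub_zero]
    have h := card_filter_mul_eq_card_of_sum_ob_eq hN0 hβ' hconst ⟨hl0, by omega⟩
    rw [hcard, mul_comm] at h
    exact Nat.eq_of_mul_eq_mul_right hN0 h
  · intro hp k hk
    have hsum := two_mul_sum_ob_add_of_card_filter_eq hN0 hβ' hcard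
      (fun l h0 h1 => hp l h0 (by omega)) k
    have hhalf : (m : ℤ) * ((N : ℤ) - 1) / 2 = ∑ i, ob N (β i + (k : ℤ)) := by
      rw [show (m : ℤ) * ((N : ℤ) - 1) = 2 * ∑ i, ob N (β i + (k : ℤ)) by
          rw [hsum, hm]; push_cast; ring,
        Int.mul_ediv_cancel_left _ two_ne_zero]
    have hNτ : (N : ℤ) * τ k = 0 := by linarith [hτ k hk]
    exact (mul_eq_zero.1 hNτ).resolve_left (by omega)

/-- the non-singular case `Rᵢ = 1`, `m = pN`: with `τ_k` defined
by `∑ᵢ ob(βᵢ + k) = m(N-1)/2 - N τ_k`, all `τ_k` vanish iff each residue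
`l ∈ {0, …, N-1}` occurs exactly `p` times among the `βᵢ`. -/
theorem tau_zero_iff_equidistributed (N p m : ℕ) (hN : 2 ≤ N) (hp : 1 ≤ p)
    (hm : m = p * N)
    (β : Fin m → ℤ) (hβ : ∀ i, 0 ≤ β i ∧ β i ≤ (N : ℤ) - 1)
    (τ : ℕ → ℤ)
    (hτ : ∀ k < N, ∑ i, ob N (β i + (k : ℤ))
      = (m : ℤ) * ((N : ℤ) - 1) / 2 - (N : ℤ) * τ k) :
    (∀ k < N, τ k = 0) ↔
      ∀ l : ℤ, 0 ≤ l → l ≤ (N : ℤ) - 1 →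
        (Finset.univ.filter (fun i => β i = l)).card = p :=
  tau_zero_iff_equidistributed_general N p m hN hm β hβ τ hτ
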